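/- arXiv:1406.1139 — 4 statements merged into one kernel-verified Lean document; each statement's English description precedes it below -/
import Mathlib

section
/- Let R be a ℚ-algebra, let φ : (ℤ² \ {(0,0)}) → R satisfy φ(m,ℓ) = −φ(−m,−ℓ) and ℓ·φ(m,ℓ) = m·φ(ℓ,m), and assume every nonzero integer is invertible in R. Then for all nonzero integers m, n and every integer b: (−m)^{b+1}·n^{−b}·φ(n,−m) = (−n)^{1−b}·m^{b}·φ(m,−n), where negative powers are interpreted via the inverses of m and n in R. -/
/-- Let `R` be a `ℚ`-algebra in which every nonzero integer is invertible, and let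
`φ : ℤ² \ {(0,0)} → R` satisfy `φ(m,ℓ) = −φ(−m,−ℓ)` and `ℓ·φ(m,ℓ) = m·φ(ℓ,m)`.
Then for all nonzero integers `m`, `n` and every integer `b`:
`(−m)^{b+1}·n^{−b}·φ(n,−m) = (−n)^{1−b}·m^{b}·φ(m,−n)`, where negative powers
are interpreted via the inverses (as units) of `m` and `n` in `R`. -/
theorem phi_double_commutator_cancellation (R : Type*) [CommRing R] [Algebra ℚ R]
    (hinv : ∀ n : ℤ, n ≠ 0 → IsUnit (n : R))
    (φ : ℤ → ℤ → R)
    (h1 : ∀ m ℓ : ℤ, (m, ℓ) ≠ (0, 0) → φ m ℓ = -φ (-m) (-ℓ))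
    (h2 : ∀ m ℓ : ℤ, (m, ℓ) ≠ (0, 0) → (ℓ : R) * φ m ℓ = (m : R) * φ ℓ m)
    (m n b : ℤ) (hm : m ≠ 0) (hn : n ≠ 0) :
    (((hinv (-m) (neg_ne_zero.mpr hm)).unit ^ (b + 1) : Rˣ) : R)
        * (((hinv n hn).unit ^ (-b) : Rˣ) : R) * φ n (-m)
      = (((hinv (-n) (neg_ne_zero.mpr hn)).unit ^ (1 - b) : Rˣ) : R)
        * (((hinv m hm).unit ^ b : Rˣ) : R) * φ m (-n) := by
  set U := (hinv (-m) (neg_ne_zero.mpr hm)).unit with hU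
  set V := (hinv n hn).unit with hV
  set W := (hinv (-n) (neg_ne_zero.mpr hn)).unit with hW
  set X := (hinv m hm).unit with hX
  have hUc : (U : R) = ((-m : ℤ) : R) := (hinv (-m) (neg_ne_zero.mpr hm)).unit_spec
  have hVc : (V : R) = ((n : ℤ) : R) := (hinv n hn).unit_spec
  have hWc : (W : R) = ((-n : ℤ) : R) := (hinv (-n) (neg_ne_zero.mpr hn)).unit_spec
  have hXc : (X : R) = ((m : ℤ) : R) := (hinv m hm).unit_spec
  have hne1 : ((n : ℤ), (-m : ℤ)) ≠ (0, 0) := by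
    simp [Prod.ext_iff, hn]
  have hne2 : ((-m : ℤ), (n : ℤ)) ≠ (0, 0) := by
    simp [Prod.ext_iff, hn]
  have e2 := h2 n (-m) hne1
  have e1 := h1 (-m) n hne2
  simp only [neg_neg] at e1
  have hφ : ((-m : ℤ) : R) * φ n (-m) = ((-n : ℤ) : R) * φ m (-n) := by
    rw [e2, e1]
    push_cast
    ring
  have hunits : U * W = X * V := by
    ext
    rw [Units.val_mul, Units.val_mul, hUc, hWc, hXc, hVc]
    push_cast
    ring
  have hdiv : U / V = X / W := by
    rw [div_eq_div_iff_mul_eq_mul]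
    rw [hunits]
  have eu1 : U ^ (b + 1) * V ^ (-b) = (U / V) ^ b * U := by
    simp [zpow_add, div_zpow, zpow_neg, div_eq_mul_inv, mul_zpow, inv_zpow, mul_comm, mul_assoc, mul_left_comm]
  have eu2 : W ^ (1 - b) * X ^ b = (X / W) ^ b * W := by
    simp [zpow_sub, div_zpow, zpow_neg, div_eq_mul_inv, mul_zpow, inv_zpow, mul_comm, mul_assoc, mul_left_comm]
  calc ((U ^ (b + 1) : Rˣ) : R) * ((V ^ (-b) : Rˣ) : R) * φ n (-m)
      = (((U ^ (b + 1) * V ^ (-b)) : Rˣ) : R) * φ n (-m) := by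
        rw [Units.val_mul]
    _ = (((X / W) ^ b : Rˣ) : R) * (((-m : ℤ) : R) * φ n (-m)) := by
        rw [eu1, hdiv, Units.val_mul, hUc, mul_assoc]
    _ = (((X / W) ^ b : Rˣ) : R) * (((-n : ℤ) : R) * φ m (-n)) := by
        rw [hφ]
    _ = (((W ^ (1 - b) * X ^ b) : Rˣ) : R) * φ m (-n) := by
        rw [eu2, Units.val_mul, hWc, mul_assoc]
    _ = ((W ^ (1 - b) : Rˣ) : R) * ((X ^ b : Rˣ) : R) * φ m (-n) := by
        rw [Units.val_mul]
end

section
/- In the ring ℤ[[q]], the identity Σ_{n≥0} q^{n(n+1)/2} = ∏_{m≥1} (1−q^{2m})²/(1−q^m) holds. -/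
/-!
The finite Jacobi triple product
`∏_{m<N} (z + q^m)(1 + q^(m+1) z) = ∑_{k ≤ 2N} q^T(k-N) [2N, k]_q z^k`, with `T(j) = j(j+1)/2`,
is proved by induction on `N`, one linear factor at a time, each step being a q-Pascal rule.
At `z = 1` its left side is `2 ∏_{m<N-1} (1 + q^(m+1)) ∏_{m<N} (1 + q^(m+1))`. Modulo `q^K` with
`N > 2K`, the terms with `k < K` or `k > 2N - K` vanish since `T(k - N) ≥ K`, and every other
Gaussian binomial is congruent to `1 / (q;q)_K`, because `[M, k] (q;q)_k (q;q)_(M-k) = (q;q)_M` and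
`(q;q)_n ≡ (q;q)_K` for `n ≥ K`. As `T(-j-1) = T(j)`, the right side becomes
`2 ∑_{n<N} q^T(n) / (q;q)_K`. Hence `2 ∑ q^T(n)` and `2 ∏ (1 - q^m)(1 + q^m)^2` agree modulo every
`q^K`; cancel the `2` in `ℤ[[q]]` and use `(1 - q^(2m))^2 / (1 - q^m) = (1 - q^m)(1 + q^m)^2`.
-/

noncomputable section

/-- The topology on `ℤ[[q]]` of coefficientwise convergence. -/
instance : TopologicalSpace (PowerSeries ℤ) :=
  TopologicalSpace.induced (fun f n => PowerSeries.coeff (R := ℤ) n f) inferInstance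

open PowerSeries

open Finset

section GaussBinom

variable {R : Type*} [CommSemiring R] (q : R)

def gaussBinom : ℕ → ℕ → R
  | _, 0 => 1
  | 0, _ + 1 => 0
  | n + 1, k + 1 => gaussBinom n (k + 1) + q ^ (n - k) * gaussBinom n k

@[simp] theorem gaussBinom_zero_right (n : ℕ) : gaussBinom q n 0 = 1 := by
  cases n <;> rfl

@[simp] theorem gaussBinom_zero_succ (k : ℕ) : gaussBinom q 0 (k + 1) = 0 := rfl

theorem gaussBinom_succ_succ (n k : ℕ) :
    gaussBinom q (n + 1) (k + 1) = gaussBinom q n (k + 1) + q ^ (n - k) * gaussBinom q n k :=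
  rfl

theorem gaussBinom_eq_zero_of_lt : ∀ {n k : ℕ}, n < k → gaussBinom q n k = 0
  | 0, _ + 1, _ => rfl
  | n + 1, k + 1, h => by
    rw [gaussBinom_succ_succ, gaussBinom_eq_zero_of_lt (by omega),
      gaussBinom_eq_zero_of_lt (by omega), mul_zero, add_zero]

@[simp] theorem gaussBinom_self : ∀ n : ℕ, gaussBinom q n n = 1
  | 0 => rfl
  | n + 1 => by
    rw [gaussBinom_succ_succ, gaussBinom_self n, gaussBinom_eq_zero_of_lt q n.lt_succ_self,
      Nat.sub_self, pow_zero, zero_add, one_mul]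

theorem gaussBinom_succ_one (n : ℕ) : gaussBinom q (n + 1) 1 = gaussBinom q n 1 + q ^ n := by
  rw [gaussBinom_succ_succ, Nat.sub_zero, gaussBinom_zero_right, mul_one]

theorem gaussBinom_succ_succ' : ∀ n k : ℕ,
    gaussBinom q (n + 1) (k + 1) = q ^ (k + 1) * gaussBinom q n (k + 1) + gaussBinom q n k
  | 0, 0 => by simp
  | 0, k + 1 => by simp [gaussBinom_succ_succ]
  | n + 1, 0 => by
    have ih : gaussBinom q (n + 1) 1 = q * gaussBinom q n 1 + 1 := by
      simpa using gaussBinom_succ_succ' n 0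
    calc gaussBinom q (n + 2) 1 = (q * gaussBinom q n 1 + 1) + q ^ (n + 1) := by
          rw [gaussBinom_succ_one, ih]
      _ = q * gaussBinom q (n + 1) 1 + 1 := by rw [gaussBinom_succ_one]; ring
      _ = _ := by simp
  | n + 1, k + 1 => by
    have hpow : q ^ (n - k) * q ^ (k + 1) * gaussBinom q n (k + 1)
        = q ^ (k + 2) * q ^ (n - (k + 1)) * gaussBinom q n (k + 1) := by
      rcases le_or_gt (k + 1) n with h | h
      · rw [← pow_add, ← pow_add]; congr 2; omega
      · rw [gaussBinom_eq_zero_of_lt q h, mul_zero, mul_zero]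
    calc gaussBinom q (n + 2) (k + 2)
        = (q ^ (k + 2) * gaussBinom q n (k + 2) + gaussBinom q n (k + 1))
          + q ^ (n - k) * (q ^ (k + 1) * gaussBinom q n (k + 1) + gaussBinom q n k) := by
          rw [gaussBinom_succ_succ, Nat.add_sub_add_right, gaussBinom_succ_succ' n (k + 1),
            gaussBinom_succ_succ' n k]
      _ = q ^ (k + 2) * gaussBinom q n (k + 2) + gaussBinom q n (k + 1)
          + q ^ (n - k) * q ^ (k + 1) * gaussBinom q n (k + 1)
          + q ^ (n - k) * gaussBinom q n k := by ring
      _ = q ^ (k + 2) * (gaussBinom q n (k + 2) + q ^ (n - (k + 1)) * gaussBinom q n (k + 1))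
          + (gaussBinom q n (k + 1) + q ^ (n - k) * gaussBinom q n k) := by rw [hpow]; ring
      _ = _ := by rw [← gaussBinom_succ_succ, ← gaussBinom_succ_succ]

end GaussBinom

section QPochhammer

variable {R : Type*} [CommRing R] (q : R)

def qPochhammer (n : ℕ) : R := ∏ i ∈ range n, (1 - q ^ (i + 1))

theorem qPochhammer_succ (n : ℕ) :
    qPochhammer q (n + 1) = qPochhammer q n * (1 - q ^ (n + 1)) :=
  prod_range_succ _ _

theorem gaussBinom_mul_qPochhammer : ∀ {n k : ℕ}, k ≤ n →
    gaussBinom q n k * qPochhammer q k * qPochhammer q (n - k) = qPochhammer q n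
  | _, 0, _ => by simp [qPochhammer]
  | n + 1, k + 1, h => by
    rcases Nat.lt_or_eq_of_le h with h | h
    · obtain ⟨d, rfl⟩ : ∃ d, n = k + 1 + d := ⟨n - (k + 1), by omega⟩
      have ih₁ := gaussBinom_mul_qPochhammer (n := k + 1 + d) (k := k + 1) (by omega)
      have ih₂ := gaussBinom_mul_qPochhammer (n := k + 1 + d) (k := k) (by omega)
      rw [show k + 1 + d - (k + 1) = d by omega, qPochhammer_succ q k] at ih₁
      rw [show k + 1 + d - k = d + 1 by omega, qPochhammer_succ q d] at ih₂
      rw [show k + 1 + d + 1 - (k + 1) = d + 1 by omega, gaussBinom_succ_succ,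
        show k + 1 + d - k = d + 1 by omega, qPochhammer_succ q k, qPochhammer_succ q d,
        qPochhammer_succ q (k + 1 + d)]
      linear_combination (1 - q ^ (d + 1)) * ih₁ + q ^ (d + 1) * (1 - q ^ (k + 1)) * ih₂
    · obtain rfl : k = n := by omega
      simp [qPochhammer]

end QPochhammer

def triangular (j : ℤ) : ℕ := (j * (j + 1) / 2).toNat

theorem natCast_triangular (j : ℤ) : (triangular j : ℤ) = j * (j + 1) / 2 := by
  refine Int.toNat_of_nonneg (Int.ediv_nonneg ?_ zero_le_two)
  rcases le_or_gt 0 j with h | h <;> nlinarith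

theorem triangular_natCast (n : ℕ) : triangular n = n * (n + 1) / 2 := by
  exact_mod_cast natCast_triangular n

theorem triangular_of_eq_add_one {i j : ℤ} (h : i = j + 1) :
    (triangular i : ℤ) = triangular j + i := by
  subst h
  rw [natCast_triangular, natCast_triangular,
    show (j + 1) * (j + 1 + 1) = j * (j + 1) + (j + 1) * 2 by ring,
    Int.add_mul_ediv_right _ _ two_ne_zero]

theorem triangular_neg_sub_one (j : ℤ) : triangular (-j - 1) = triangular j := by
  rw [triangular, triangular, show (-j - 1) * (-j - 1 + 1) = j * (j + 1) by ring]

theorem self_le_triangular (j : ℤ) : j ≤ triangular j := by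
  rw [natCast_triangular, Int.le_ediv_iff_mul_le two_pos]
  rcases le_or_gt j 0 with h | h <;> nlinarith

theorem sum_range_pow_triangular_sub {R : Type*} [CommSemiring R] (q : R) (N : ℕ) :
    ∑ k ∈ range (2 * N + 1), q ^ triangular (k - N)
      = ∑ n ∈ range N, q ^ triangular n + ∑ n ∈ range (N + 1), q ^ triangular n := by
  rw [show 2 * N + 1 = N + (N + 1) by ring, sum_range_add, ← sum_range_reflect]
  congr 1 <;> refine sum_congr rfl fun n hn => ?_
  · rw [← triangular_neg_sub_one]
    congr 2
    have := mem_range.1 hn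
    push_cast [Nat.cast_sub (show n ≤ N - 1 by omega)]
    omega
  · congr 2
    push_cast
    ring

section FiniteJacobiTripleProduct

variable {R : Type*} [CommSemiring R]

theorem sum_range_mul_add_mul {c d : ℕ → R} {n : ℕ} {a b : R} (z : R) (hc : c (n + 1) = 0)
    (h₀ : d 0 = a * c 0) (hd : ∀ k, d (k + 1) = a * c (k + 1) + b * c k) :
    (∑ k ∈ range (n + 1), c k * z ^ k) * (a + b * z) = ∑ k ∈ range (n + 2), d k * z ^ k := by
  have hshift : ∑ k ∈ range (n + 1), c (k + 1) * z ^ (k + 1) + c 0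
      = ∑ k ∈ range (n + 1), c k * z ^ k := by
    have h := sum_range_succ' (fun k => c k * z ^ k) (n + 1)
    rw [sum_range_succ, hc, zero_mul, add_zero, pow_zero, mul_one] at h
    exact h.symm
  have hterm₁ (k : ℕ) : a * (c (k + 1) * z ^ (k + 1)) = a * c (k + 1) * z ^ (k + 1) := by ring
  have hterm₂ (k : ℕ) : b * z * (c k * z ^ k) = b * c k * z ^ (k + 1) := by ring
  calc (∑ k ∈ range (n + 1), c k * z ^ k) * (a + b * z)
      = a * (∑ k ∈ range (n + 1), c (k + 1) * z ^ (k + 1) + c 0)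
          + b * z * ∑ k ∈ range (n + 1), c k * z ^ k := by rw [hshift]; ring
    _ = ∑ k ∈ range (n + 1), d (k + 1) * z ^ (k + 1) + d 0 * z ^ 0 := by
      simp only [hd, h₀, add_mul, mul_add, sum_add_distrib, mul_sum, hterm₁, hterm₂, pow_zero,
        mul_one]
      ring
    _ = ∑ k ∈ range (n + 2), d k * z ^ k :=
      (sum_range_succ' (fun k => d k * z ^ k) (n + 1)).symm

variable (q z : R)

theorem sum_gaussBinom_mul_add_pow (N : ℕ) :
    (∑ k ∈ range (2 * N + 1), q ^ triangular (k - N) * gaussBinom q (2 * N) k * z ^ k)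
        * (z + q ^ N)
      = ∑ k ∈ range (2 * N + 2),
          q ^ triangular (k - N - 1) * gaussBinom q (2 * N + 1) k * z ^ k := by
  rw [show z + q ^ N = q ^ N + 1 * z by ring]
  refine sum_range_mul_add_mul z ?_ ?_ fun k => ?_
  · rw [gaussBinom_eq_zero_of_lt q (by omega), mul_zero]
  · have e := triangular_of_eq_add_one (i := (0 : ℕ) - N) (j := (0 : ℕ) - N - 1) (by ring)
    rw [gaussBinom_zero_right, gaussBinom_zero_right, mul_one, mul_one, ← pow_add]
    congr 1
    omega
  · have e₁ := triangular_of_eq_add_one (i := (k + 1 : ℕ) - N) (j := (k + 1 : ℕ) - N - 1)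
      (by ring)
    have e₂ : triangular ((k + 1 : ℕ) - N - 1) = triangular (k - N) := by
      congr 1; push_cast; ring
    rw [gaussBinom_succ_succ', mul_add, ← mul_assoc, ← mul_assoc, ← pow_add, one_mul, e₂,
      show triangular (k - N) + (k + 1) = N + triangular ((k + 1 : ℕ) - N) by omega, pow_add]

theorem sum_gaussBinom_mul_one_add_pow_mul (N : ℕ) :
    (∑ k ∈ range (2 * N + 2), q ^ triangular (k - N - 1) * gaussBinom q (2 * N + 1) k * z ^ k)
        * (1 + q ^ (N + 1) * z)
      = ∑ k ∈ range (2 * (N + 1) + 1),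
          q ^ triangular (k - (N + 1 : ℕ)) * gaussBinom q (2 * (N + 1)) k * z ^ k := by
  rw [show 2 * (N + 1) = 2 * N + 1 + 1 by ring]
  refine sum_range_mul_add_mul z ?_ ?_ fun k => ?_
  · rw [gaussBinom_eq_zero_of_lt q (by omega), mul_zero]
  · rw [gaussBinom_zero_right, gaussBinom_zero_right, one_mul]
    congr 3
    push_cast
    ring
  · rcases le_or_gt k (2 * N + 1) with hk | hk
    · have e := triangular_of_eq_add_one (i := (k + 1 : ℕ) - (N + 1 : ℕ)) (j := k - N - 1)
        (by push_cast; ring)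
      have e₂ : triangular ((k + 1 : ℕ) - N - 1) = triangular ((k + 1 : ℕ) - (N + 1 : ℕ)) := by
        congr 1; push_cast; ring
      rw [gaussBinom_succ_succ, mul_add, one_mul, e₂, ← mul_assoc, ← mul_assoc, ← pow_add,
        ← pow_add]
      congr 3
      omega
    · simp [gaussBinom_eq_zero_of_lt q hk,
        gaussBinom_eq_zero_of_lt q (show 2 * N + 1 < k + 1 by omega),
        gaussBinom_eq_zero_of_lt q (show 2 * N + 1 + 1 < k + 1 by omega)]

theorem prod_range_add_pow_mul_one_add_pow_mul (N : ℕ) :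
    ∏ m ∈ range N, (z + q ^ m) * (1 + q ^ (m + 1) * z)
      = ∑ k ∈ range (2 * N + 1), q ^ triangular (k - N) * gaussBinom q (2 * N) k * z ^ k := by
  induction N with
  | zero => simp [triangular]
  | succ N ih =>
    rw [prod_range_succ, ih, ← mul_assoc, sum_gaussBinom_mul_add_pow,
      sum_gaussBinom_mul_one_add_pow_mul]

theorem prod_range_one_add_pow_mul_one_add_pow (N : ℕ) :
    ∏ m ∈ range N, (1 + q ^ m) * (1 + q ^ (m + 1))
      = ∑ k ∈ range (2 * N + 1), q ^ triangular (k - N) * gaussBinom q (2 * N) k := by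
  simpa [add_comm] using prod_range_add_pow_mul_one_add_pow_mul q 1 N

end FiniteJacobiTripleProduct

namespace PowerSeries

section ModXPow

variable {R : Type*} [CommRing R]

abbrev modXPow (K : ℕ) : R⟦X⟧ →+* R⟦X⟧ ⧸ Ideal.span {(X : R⟦X⟧) ^ K} := Ideal.Quotient.mk _

variable {K : ℕ}

theorem modXPow_eq_iff {a b : R⟦X⟧} : modXPow K a = modXPow K b ↔ X ^ K ∣ a - b := by
  rw [Ideal.Quotient.eq, Ideal.mem_span_singleton]

theorem eq_of_forall_modXPow_eq {a b : R⟦X⟧} (h : ∀ K, modXPow K a = modXPow K b) : a = b := by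
  ext d
  have := X_pow_dvd_iff.1 (modXPow_eq_iff.1 (h (d + 1))) d d.lt_succ_self
  rwa [map_sub, sub_eq_zero] at this

theorem modXPow_X_pow {j : ℕ} (h : K ≤ j) : modXPow K (X ^ j : R⟦X⟧) = 0 :=
  Ideal.Quotient.eq_zero_iff_mem.2 (Ideal.mem_span_singleton.2 (pow_dvd_pow X h))

theorem modXPow_one_sub_X_pow {j : ℕ} (h : K ≤ j) : modXPow K (1 - X ^ j : R⟦X⟧) = 1 := by
  rw [map_sub, map_one, modXPow_X_pow h, sub_zero]

theorem modXPow_one_add_X_pow {j : ℕ} (h : K ≤ j) : modXPow K (1 + X ^ j : R⟦X⟧) = 1 := by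
  rw [map_add, map_one, modXPow_X_pow h, add_zero]

theorem modXPow_prod_range_eq {f : ℕ → R⟦X⟧} (hf : ∀ i ≥ K, modXPow K (f i) = 1) {n : ℕ}
    (hn : K ≤ n) : modXPow K (∏ i ∈ range n, f i) = modXPow K (∏ i ∈ range K, f i) := by
  simp only [map_prod]
  exact eventually_constant_prod hf hn

theorem modXPow_qPochhammer_X {n : ℕ} (hn : K ≤ n) :
    modXPow K (qPochhammer (X : R⟦X⟧) n) = modXPow K (qPochhammer X K) :=
  modXPow_prod_range_eq (fun _ _ => modXPow_one_sub_X_pow (by omega)) hn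

theorem isUnit_qPochhammer_X (n : ℕ) : IsUnit (qPochhammer (X : R⟦X⟧) n) := by
  rw [isUnit_iff_constantCoeff, qPochhammer, map_prod]
  simp

theorem modXPow_gaussBinom_X_mul_qPochhammer {n k : ℕ} (hkn : k ≤ n) (hk : K ≤ k)
    (hnk : K ≤ n - k) :
    modXPow K (gaussBinom (X : R⟦X⟧) n k) * modXPow K (qPochhammer X K) = 1 := by
  have h := congrArg (modXPow K) (gaussBinom_mul_qPochhammer (X : R⟦X⟧) hkn)
  rw [map_mul, map_mul, modXPow_qPochhammer_X hk, modXPow_qPochhammer_X hnk,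
    modXPow_qPochhammer_X (hk.trans hkn)] at h
  exact ((isUnit_qPochhammer_X K).map _).mul_right_cancel (by rw [h, one_mul])

theorem modXPow_X_pow_triangular_mul_gaussBinom {N k : ℕ} (hN : 2 * K < N) (hk : k ≤ 2 * N) :
    modXPow K ((X : R⟦X⟧) ^ triangular (k - N) * gaussBinom X (2 * N) k)
        * modXPow K (qPochhammer X K)
      = modXPow K (X ^ triangular (k - N)) := by
  rw [map_mul, mul_assoc]
  by_cases hmid : K ≤ k ∧ K ≤ 2 * N - k
  · rw [modXPow_gaussBinom_X_mul_qPochhammer hk hmid.1 hmid.2, mul_one]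
  · have h₁ := self_le_triangular (k - N)
    have h₂ := self_le_triangular (-(k - N) - 1)
    rw [triangular_neg_sub_one] at h₂
    rw [modXPow_X_pow (show K ≤ triangular (k - N) by omega), zero_mul]

theorem modXPow_two_mul_sum_X_pow_triangular {N : ℕ} (hN : 2 * K < N) :
    modXPow K (2 * ∑ n ∈ range N, (X : R⟦X⟧) ^ triangular n)
      = modXPow K (2 * ∏ m ∈ range K, (1 - X ^ (m + 1)) * (1 + X ^ (m + 1)) ^ 2) := by
  set b := modXPow K (∏ m ∈ range K, (1 + (X : R⟦X⟧) ^ (m + 1)))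
  have hb {n : ℕ} (hn : K ≤ n) : modXPow K (∏ m ∈ range n, (1 + (X : R⟦X⟧) ^ (m + 1))) = b :=
    modXPow_prod_range_eq (fun _ _ => modXPow_one_add_X_pow (by omega)) hn
  have hprod : modXPow K (∏ m ∈ range N, (1 + (X : R⟦X⟧) ^ m) * (1 + X ^ (m + 1)))
      = 2 * b ^ 2 := by
    obtain ⟨N, rfl⟩ : ∃ N', N = N' + 1 := ⟨N - 1, by omega⟩
    rw [prod_mul_distrib, prod_range_succ', pow_zero, map_mul, map_mul, hb (by omega),
      hb (by omega), one_add_one_eq_two, map_ofNat]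
    ring
  have hsum : modXPow K (∏ m ∈ range N, (1 + (X : R⟦X⟧) ^ m) * (1 + X ^ (m + 1)))
        * modXPow K (qPochhammer X K)
      = 2 * modXPow K (∑ n ∈ range N, (X : R⟦X⟧) ^ triangular n) := by
    rw [prod_range_one_add_pow_mul_one_add_pow, map_sum, sum_mul,
      sum_congr rfl fun k hk => modXPow_X_pow_triangular_mul_gaussBinom hN
        (Nat.lt_succ_iff.1 (mem_range.1 hk)),
      ← map_sum, sum_range_pow_triangular_sub, sum_range_succ, map_add, map_add,
      modXPow_X_pow (show K ≤ triangular N by have := self_le_triangular N; omega), add_zero,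
      two_mul]
  rw [map_mul, map_mul, map_ofNat, ← hsum, hprod, prod_mul_distrib, prod_pow, ← qPochhammer,
    map_mul, map_pow]
  ring

end ModXPow

open Filter Topology

theorem tendsto_order_of_X_pow_dvd {R : Type*} [Semiring R] {f : ℕ → R⟦X⟧}
    (h : ∀ n, X ^ n ∣ f n) : Tendsto (fun n => (f n).order) atTop (𝓝 ⊤) := by
  refine ENat.tendsto_nhds_top_iff_natCast_lt.2 fun m =>
    eventually_atTop.2 ⟨m + 1, fun n hn => ?_⟩
  refine (Nat.cast_lt.2 (Nat.lt_of_succ_le hn)).trans_le (nat_le_order _ _ fun i hi => ?_)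
  exact X_pow_dvd_iff.1 (h n) i hi

theorem sq_one_sub_X_pow_two_mul_mul_inverse {R : Type*} [CommRing R] (n : ℕ) :
    (1 - (X : R⟦X⟧) ^ (2 * (n + 1))) ^ 2 * Ring.inverse (1 - X ^ (n + 1))
      = (1 - X ^ (n + 1)) * (1 + X ^ (n + 1)) ^ 2 := by
  have hu : IsUnit (1 - (X : R⟦X⟧) ^ (n + 1)) := by
    rw [isUnit_iff_constantCoeff]
    simp
  calc (1 - (X : R⟦X⟧) ^ (2 * (n + 1))) ^ 2 * Ring.inverse (1 - X ^ (n + 1))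
      = (1 - X ^ (n + 1)) * (1 + X ^ (n + 1)) ^ 2
          * ((1 - X ^ (n + 1)) * Ring.inverse (1 - X ^ (n + 1))) := by ring
    _ = _ := by rw [Ring.mul_inverse_cancel _ hu, mul_one]

namespace WithPiTopology

open scoped PowerSeries.WithPiTopology

variable {R : Type*} [CommRing R] [TopologicalSpace R]

theorem eventually_modXPow_eq_of_tendsto [DiscreteTopology R] {ι : Type*} {l : Filter ι}
    {F : ι → R⟦X⟧} {a : R⟦X⟧} (h : Tendsto F l (𝓝 a)) (K : ℕ) :
    ∀ᶠ i in l, modXPow K (F i) = modXPow K a := by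
  rw [tendsto_iff_coeff_tendsto] at h
  have hcoeff : ∀ᶠ i in l, ∀ d ∈ range K, coeff d (F i) = coeff d a :=
    (eventually_all_finset _).2 fun d _ => tendsto_pure.1 (nhds_discrete R ▸ h d)
  filter_upwards [hcoeff] with i hi
  rw [modXPow_eq_iff, X_pow_dvd_iff]
  intro d hd
  rw [map_sub, hi d (mem_range.2 hd), sub_self]

theorem summable_of_X_pow_dvd {f : ℕ → R⟦X⟧} (h : ∀ n, X ^ n ∣ f n) : Summable f :=
  summable_of_tendsto_order_atTop_nhds_top R (tendsto_order_of_X_pow_dvd h)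

theorem multipliable_of_X_pow_dvd_sub_one {f : ℕ → R⟦X⟧} (h : ∀ n, X ^ n ∣ f n - 1) :
    Multipliable f := by
  simpa using multipliable_one_add_of_tendsto_order_atTop_nhds_top R
    (tendsto_order_of_X_pow_dvd h)

theorem two_mul_tsum_X_pow_triangular (R : Type*) [CommRing R] [TopologicalSpace R]
    [DiscreteTopology R] :
    2 * ∑' n : ℕ, (X : R⟦X⟧) ^ (n * (n + 1) / 2)
      = 2 * ∏' n : ℕ, (1 - X ^ (n + 1)) * (1 + X ^ (n + 1)) ^ 2 := by
  have hS := (summable_of_X_pow_dvd (f := fun n => (X : R⟦X⟧) ^ (n * (n + 1) / 2)) fun n =>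
    pow_dvd_pow X <| by
      have := self_le_triangular n; rw [triangular_natCast] at this; omega).hasSum
  have hP := (multipliable_of_X_pow_dvd_sub_one
    (f := fun n => (1 - (X : R⟦X⟧) ^ (n + 1)) * (1 + X ^ (n + 1)) ^ 2) fun n =>
    ⟨X * (1 - X ^ (n + 1) - X ^ (n + 1) * X ^ (n + 1)), by ring⟩).hasProd
  refine eq_of_forall_modXPow_eq fun K => ?_
  have hfactor (i : ℕ) (hi : K ≤ i) :
      modXPow K ((1 - (X : R⟦X⟧) ^ (i + 1)) * (1 + X ^ (i + 1)) ^ 2) = 1 := by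
    rw [map_mul, map_pow, modXPow_one_sub_X_pow (by omega), modXPow_one_add_X_pow (by omega),
      one_pow, one_mul]
  obtain ⟨N, hSN, hN⟩ := ((eventually_modXPow_eq_of_tendsto hS.tendsto_sum_nat K).and
    (eventually_gt_atTop (2 * K))).exists
  obtain ⟨n, hPn, hn⟩ := ((eventually_modXPow_eq_of_tendsto hP.tendsto_prod_nat K).and
    (eventually_ge_atTop K)).exists
  have hcore := modXPow_two_mul_sum_X_pow_triangular (R := R) hN
  simp only [triangular_natCast] at hcore
  calc modXPow K (2 * ∑' n : ℕ, (X : R⟦X⟧) ^ (n * (n + 1) / 2))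
      = modXPow K (2 * ∑ i ∈ range N, (X : R⟦X⟧) ^ (i * (i + 1) / 2)) := by
        rw [map_mul, map_mul, hSN]
    _ = modXPow K (2 * ∏ i ∈ range K, (1 - X ^ (i + 1)) * (1 + X ^ (i + 1)) ^ 2) := hcore
    _ = modXPow K (2 * ∏ i ∈ range n, (1 - X ^ (i + 1)) * (1 + X ^ (i + 1)) ^ 2) := by
        rw [map_mul, map_mul, modXPow_prod_range_eq hfactor hn]
    _ = modXPow K (2 * ∏' n : ℕ, (1 - X ^ (n + 1)) * (1 + X ^ (n + 1)) ^ 2) := by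
        rw [map_mul, map_mul, hPn]

end WithPiTopology

end PowerSeries

theorem topologicalSpace_eq_withPiTopology :
    (inferInstance : TopologicalSpace ℤ⟦X⟧) = WithPiTopology.instTopologicalSpace ℤ := by
  have hcoeff (n : ℕ) : Continuous (coeff (R := ℤ) n) :=
    (continuous_apply n).comp (continuous_induced_dom (f := fun f n => coeff (R := ℤ) n f))
  refine le_antisymm (le_of_nhds_le_nhds fun a => ?_) ?_
  · exact Filter.tendsto_id'.1
      ((WithPiTopology.tendsto_iff_coeff_tendsto ℤ id _ a).2 fun d => (hcoeff d).tendsto a)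
  · let _ := WithPiTopology.instTopologicalSpace ℤ
    exact continuous_iff_le_induced.1
      (continuous_pi fun n => WithPiTopology.continuous_coeff ℤ n)

/-- The Jacobi triple product special case: in `ℤ[[q]]`,
`Σ_{n≥0} q^{n(n+1)/2} = ∏_{m≥1} (1−q^{2m})²/(1−q^m)`.  The inverse of `1−q^m` is taken
via `Ring.inverse` (it is a unit of `ℤ[[q]]`). -/
theorem triangular_theta_eq_eta_quotient :
    (∑' n : ℕ, (X : PowerSeries ℤ) ^ (n * (n + 1) / 2))
      = ∏' m : ℕ+, ((1 - (X : PowerSeries ℤ) ^ (2 * m : ℕ))^2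
          * Ring.inverse (1 - (X : PowerSeries ℤ) ^ (m : ℕ))) := by
  rw [tprod_pnat_eq_tprod_succ (f := fun m => (1 - X ^ (2 * m)) ^ 2 * Ring.inverse (1 - X ^ m))]
  simp only [sq_one_sub_X_pow_two_mul_mul_inverse]
  have h2 : (2 : ℤ⟦X⟧) ≠ 0 := fun h => by
    simpa [map_ofNat] using congrArg (constantCoeff (R := ℤ)) h
  refine mul_left_cancel₀ h2 ?_
  convert WithPiTopology.two_mul_tsum_X_pow_triangular ℤ using 3 <;>
    exact topologicalSpace_eq_withPiTopology

end
end

section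
/- Let R be a commutative ring and let f = Σ_{i=0}^{n} a_i x^i and g = Σ_{j=0}^{n} b_j x^j be polynomials of degree at most n over R. Then f'·g − f·g' = Σ_{m=0}^{2n−2} ( Σ_{i+j=m+1, 0≤i<j≤n} (i−j)·(a_i b_j − a_j b_i) ) x^m, where f', g' denote formal derivatives. -/
/-!
The Wronskian `W(u, v) = u v' - u' v` is an alternating bilinear form, so expanding `f` and `g`
in the monomial basis gives `W(f, g) = ∑_{i<j} (aᵢ bⱼ - aⱼ bᵢ) W(Xⁱ, Xʲ)`: only the Plücker
coordinates of the pair `(f, g)` survive. Together with `W(Xⁱ, Xʲ) = (j - i) X^(i+j-1)` and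
`f' g - f g' = -W(f, g)`, collecting terms by degree gives the identity.
-/

open Polynomial

theorem Finset.sum_product_self_eq_sum_filter_lt {ι M : Type*} [LinearOrder ι] [AddCommMonoid M]
    (s : Finset ι) (h : ι × ι → M) (hdiag : ∀ i ∈ s, h (i, i) = 0) :
    ∑ p ∈ s ×ˢ s, h p = ∑ p ∈ (s ×ˢ s).filter (fun p => p.1 < p.2), (h p + h p.swap) := by
  rw [← Finset.sum_filter_add_sum_filter_not (s ×ˢ s) (fun p => p.1 < p.2), Finset.sum_add_distrib]
  congr 1
  have hsub : (s ×ˢ s).filter (fun p => p.2 < p.1) ⊆ (s ×ˢ s).filter (fun p => ¬p.1 < p.2) :=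
    Finset.monotone_filter_right _ fun _ _ => LT.lt.not_gt
  have hzero : ∀ p ∈ (s ×ˢ s).filter (fun p => ¬p.1 < p.2),
      p ∉ (s ×ˢ s).filter (fun p => p.2 < p.1) → h p = 0 := by
    rintro ⟨i, j⟩ hp hp'
    simp only [Finset.mem_filter, Finset.mem_product, not_lt, not_and] at hp hp'
    obtain rfl : i = j := le_antisymm (hp' ⟨hp.1.1, hp.1.2⟩) hp.2
    exact hdiag i hp.1.1
  rw [← Finset.sum_subset hsub hzero]
  refine Finset.sum_nbij' Prod.swap Prod.swap ?_ ?_ (fun _ _ => rfl) (fun _ _ => rfl)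
    (fun _ _ => rfl) <;>
  · rintro ⟨i, j⟩ hp
    simp only [Finset.mem_filter, Finset.mem_product, Prod.swap_prod_mk] at hp ⊢
    exact ⟨⟨hp.1.2, hp.1.1⟩, hp.2⟩

theorem LinearMap.IsAlt.map_sum_smul_sum_smul {R M N ι : Type*} [CommRing R] [AddCommGroup M]
    [Module R M] [AddCommGroup N] [Module R N] [LinearOrder ι] {B : M →ₗ[R] M →ₗ[R] N}
    (hB : B.IsAlt) (s : Finset ι) (a b : ι → R) (v : ι → M) :
    B (∑ i ∈ s, a i • v i) (∑ j ∈ s, b j • v j)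
      = ∑ p ∈ (s ×ˢ s).filter (fun p => p.1 < p.2),
          (a p.1 * b p.2 - a p.2 * b p.1) • B (v p.1) (v p.2) := by
  have hexp : B (∑ i ∈ s, a i • v i) (∑ j ∈ s, b j • v j)
      = ∑ p ∈ s ×ˢ s, (a p.1 * b p.2) • B (v p.1) (v p.2) := by
    simp only [map_sum, map_smul, LinearMap.sum_apply, LinearMap.smul_apply,
      Finset.smul_sum, smul_smul, Finset.sum_product]
    rw [Finset.sum_comm]
    exact Finset.sum_congr rfl fun i _ => Finset.sum_congr rfl fun j _ => by rw [mul_comm]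
  rw [hexp, Finset.sum_product_self_eq_sum_filter_lt _ _ fun i _ => by rw [hB, smul_zero]]
  refine Finset.sum_congr rfl fun p _ => ?_
  rw [Prod.fst_swap, Prod.snd_swap, ← hB.neg (v p.1), smul_neg, ← sub_eq_add_neg, ← sub_smul]

namespace Polynomial

theorem wronskian_X_pow {R : Type*} [CommRing R] (i j : ℕ) :
    wronskian (X ^ i : R[X]) (X ^ j) = ((j : ℤ) - i) • X ^ (i + j - 1) := by
  rw [wronskian, derivative_X_pow, derivative_X_pow, sub_smul, natCast_zsmul, natCast_zsmul]
  rcases i with _ | i <;> rcases j with _ | j <;> simp [pow_succ, nsmul_eq_mul]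
  ring

theorem sum_C_mul_X_pow_eq_sum_fiberwise {R ι : Type*} [CommRing R] {s : Finset ι}
    {t : Finset ℕ} {d : ι → ℕ} (hd : ∀ i ∈ s, d i ∈ t) (c : ι → R) :
    ∑ i ∈ s, C (c i) * X ^ d i = ∑ m ∈ t, C (∑ i ∈ s.filter (fun i => d i = m), c i) * X ^ m := by
  rw [← Finset.sum_fiberwise_of_maps_to hd]
  refine Finset.sum_congr rfl fun m _ => ?_
  rw [map_sum, Finset.sum_mul]
  exact Finset.sum_congr rfl fun i hi => by rw [(Finset.mem_filter.mp hi).2]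

end Polynomial

/-- The Wronskian–Plücker identity: for `f = Σ_{i=0}^n aᵢ xⁱ` and `g = Σ_{j=0}^n bⱼ xʲ`
over a commutative ring,
`f'·g − f·g' = Σ_{m=0}^{2n−2} (Σ_{i+j=m+1, 0≤i<j≤n} (i−j)(aᵢbⱼ−aⱼbᵢ)) x^m`. -/
theorem wronskian_plucker (R : Type*) [CommRing R] (n : ℕ) (a b : ℕ → R) :
    derivative (∑ i ∈ Finset.range (n+1), C (a i) * X ^ i)
        * (∑ j ∈ Finset.range (n+1), C (b j) * X ^ j)
      - (∑ i ∈ Finset.range (n+1), C (a i) * X ^ i)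
        * derivative (∑ j ∈ Finset.range (n+1), C (b j) * X ^ j)
      = ∑ m ∈ Finset.range (2 * n - 1),
          C (∑ p ∈ (Finset.range (n+1) ×ˢ Finset.range (n+1)).filter
                (fun p => p.1 + p.2 = m + 1 ∧ p.1 < p.2),
              ((p.1 : ℤ) - (p.2 : ℤ)) • (a p.1 * b p.2 - a p.2 * b p.1))
            * X ^ m := by
  set S := Finset.range (n + 1)
  have hdeg : ∀ p ∈ (S ×ˢ S).filter (fun p => p.1 < p.2),
      p.1 + p.2 - 1 ∈ Finset.range (2 * n - 1) := by
    intro p hp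
    simp only [S, Finset.mem_filter, Finset.mem_product, Finset.mem_range] at hp ⊢
    omega
  calc _ = -wronskian (∑ i ∈ S, a i • X ^ i) (∑ j ∈ S, b j • X ^ j) := by
        simp only [wronskian, ← C_mul']
        ring
    _ = ∑ p ∈ (S ×ˢ S).filter (fun p => p.1 < p.2),
          C (((p.1 : ℤ) - p.2) • (a p.1 * b p.2 - a p.2 * b p.1)) * X ^ (p.1 + p.2 - 1) := by
        rw [← wronskianBilin_apply, isAlt_wronskianBilin.map_sum_smul_sum_smul,
          ← Finset.sum_neg_distrib]
        refine Finset.sum_congr rfl fun p _ => ?_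
        rw [wronskianBilin_apply, wronskian_X_pow, ← C_mul', zsmul_eq_mul, zsmul_eq_mul, C_mul,
          map_intCast]
        push_cast
        ring
    _ = _ := by
        rw [sum_C_mul_X_pow_eq_sum_fiberwise hdeg]
        refine Finset.sum_congr rfl fun m _ => ?_
        rw [Finset.filter_filter]
        congr 3
        exact Finset.filter_congr fun p _ => by omega
end

section
/- In the ring ℚ((y))[[q]], define T = 8·Σ_{k≥1} y^k/k³ + 12·Σ_{k,n≥1} q^{kn}/k³ + 8·Σ_{k,n≥1} (y^k + y^{−k})·q^{kn}/k³ + 2·Σ_{k,n≥1} (y^{2k} + y^{−2k})·q^{(2n−1)k}/k³, define J = −Σ_{k≥1} y^k − 1/2 − Σ_{k,r≥1} (y^k − y^{−k})·q^{kr}, and define G₁ = −Σ_{k,r≥1} (y^{2k} − y^{−2k})·q^{k(2r−1)}. Then (y·d/dy)³ T = −4 − 8·J − 16·G₁. -/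
noncomputable section

open scoped BigOperators

/-- The variable `y`, as a Laurent series. -/
def y : LaurentSeries ℚ := HahnSeries.single (1 : ℤ) (1 : ℚ)

/-- The operator `y·d/dy` on Laurent series: it multiplies the coefficient of `y^k` by `k`. -/
def Dy (f : LaurentSeries ℚ) : LaurentSeries ℚ where
  coeff k := (k : ℚ) * f.coeff k
  isPWO_support' := f.isPWO_support.mono (by
    intro k hk
    simp only [Function.mem_support, ne_eq] at hk ⊢
    exact fun h => hk (by rw [h, mul_zero]))

/-- The operator `y·d/dy` on `ℚ((y))[[q]]`, acting on each `q`-coefficient. -/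
def DyP (F : PowerSeries (LaurentSeries ℚ)) : PowerSeries (LaurentSeries ℚ) :=
  PowerSeries.mk fun d => Dy (PowerSeries.coeff d F)

/-- `T = 8·Σ_{k≥1} y^k/k³ + 12·Σ_{k,n≥1} q^{kn}/k³ + 8·Σ_{k,n≥1} (y^k+y^{−k})q^{kn}/k³
  + 2·Σ_{k,n≥1} (y^{2k}+y^{−2k})q^{(2n−1)k}/k³` in `ℚ((y))[[q]]`. -/
def T : PowerSeries (LaurentSeries ℚ) :=
  PowerSeries.mk fun d =>
    if d = 0 then
      HahnSeries.ofPowerSeries ℤ ℚ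
        (PowerSeries.mk fun k => if k = 0 then 0 else 8 / (k : ℚ)^3)
    else
      12 * (∑ k ∈ d.divisors, 1 / (k : LaurentSeries ℚ)^3)
      + 8 * (∑ k ∈ d.divisors, (y^(k:ℤ) + y^(-(k:ℤ))) / (k : LaurentSeries ℚ)^3)
      + 2 * (∑ k ∈ d.divisors.filter (fun k => Odd (d / k)),
          (y^(2*(k:ℤ)) + y^(-(2*(k:ℤ)))) / (k : LaurentSeries ℚ)^3)

/-- `J = −Σ_{k≥1} y^k − 1/2 − Σ_{k,r≥1} (y^k − y^{−k})q^{kr}`, the expansion of the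
deformed Eisenstein series `J_{2,1}`. -/
def J : PowerSeries (LaurentSeries ℚ) :=
  PowerSeries.mk fun d =>
    if d = 0 then
      HahnSeries.ofPowerSeries ℤ ℚ
        (PowerSeries.mk fun k => if k = 0 then -(1/2) else -1)
    else -(∑ k ∈ d.divisors, (y^(k:ℤ) - y^(-(k:ℤ))))

/-- `G₁ = −Σ_{k,r≥1} (y^{2k} − y^{−2k})q^{k(2r−1)}`, the expansion of `J_{4,1}(2z,2τ)`. -/
def G₁ : PowerSeries (LaurentSeries ℚ) :=
  PowerSeries.mk fun d =>
    if d = 0 then 0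
    else -(∑ k ∈ d.divisors.filter (fun k => Odd (d / k)),
        (y^(2*(k:ℤ)) - y^(-(2*(k:ℤ)))))

/-! Everything is checked coefficientwise in `q`. On Laurent series `(y·d/dy)³` is `ℚ`-linear
and multiplies `y ^ a` by `a³`, so it kills constants and turns `(y ^ a + y ^ (-a)) / k³` into
`(a / k)³ (y ^ a - y ^ (-a))`: the weights `1 / k³` of `T` cancel for `a = k` and become `8`
for `a = 2k`. In `q`-degree `0` it turns `Σ_{k ≥ 1} 8 y ^ k / k³` into
`8 Σ_{k ≥ 1} y ^ k = -4 - 8 J₀`. -/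

lemma y_zpow (n : ℤ) : y ^ n = HahnSeries.single n 1 := (RatFunc.single_zpow n).symm

def Dy3 : LaurentSeries ℚ →ₗ[ℚ] LaurentSeries ℚ where
  toFun f := Dy (Dy (Dy f))
  map_add' f g := by ext n; simp only [Dy, HahnSeries.coeff_add]; ring
  map_smul' c f := by
    ext n
    simp only [Dy, HahnSeries.coeff_smul, smul_eq_mul, RingHom.id_apply]
    ring

lemma coeff_Dy3 (f : LaurentSeries ℚ) (n : ℤ) :
    (Dy3 f).coeff n = (n : ℚ) ^ 3 * f.coeff n := by
  change (n : ℚ) * ((n : ℚ) * ((n : ℚ) * f.coeff n)) = _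
  ring

lemma Dy3_C_mul (c : ℚ) (f : LaurentSeries ℚ) :
    Dy3 (HahnSeries.C c * f) = HahnSeries.C c * Dy3 f := by
  rw [HahnSeries.C_mul_eq_smul, map_smul, HahnSeries.C_mul_eq_smul]

lemma Dy3_ofNat_mul (m : ℕ) [m.AtLeastTwo] (f : LaurentSeries ℚ) :
    Dy3 (ofNat(m) * f) = ofNat(m) * Dy3 f := by
  simpa using Dy3_C_mul (OfNat.ofNat m) f

lemma Dy3_div_natCast_pow (f : LaurentSeries ℚ) (k m : ℕ) :
    Dy3 (f / (k : LaurentSeries ℚ) ^ m) = Dy3 f / (k : LaurentSeries ℚ) ^ m := by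
  simpa [div_eq_mul_inv, mul_comm] using Dy3_C_mul ((k : ℚ) ^ m)⁻¹ f

lemma Dy3_zpow (a : ℤ) : Dy3 (y ^ a) = (a : LaurentSeries ℚ) ^ 3 * y ^ a := by
  rw [← map_intCast HahnSeries.C, ← map_pow, HahnSeries.C_mul_eq_smul]
  ext n
  rw [coeff_Dy3, HahnSeries.coeff_smul, y_zpow, HahnSeries.coeff_single, smul_eq_mul]
  split_ifs with h <;> simp [h]

lemma Dy3_one : Dy3 1 = 0 := by
  simpa using Dy3_zpow 0

lemma Dy3_coe_powerSeries (φ : PowerSeries ℚ) :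
    Dy3 (φ : LaurentSeries ℚ) =
      (PowerSeries.mk fun k => (k : ℚ) ^ 3 * PowerSeries.coeff k φ : PowerSeries ℚ) := by
  ext n
  rw [coeff_Dy3, PowerSeries.coeff_coe, PowerSeries.coeff_coe]
  split_ifs with h
  · rw [mul_zero]
  · simp [abs_of_nonneg (not_lt.mp h)]

lemma coeff_DyP_DyP_DyP (F : PowerSeries (LaurentSeries ℚ)) (d : ℕ) :
    PowerSeries.coeff d (DyP (DyP (DyP F))) = Dy3 (PowerSeries.coeff d F) := by
  simp only [DyP, PowerSeries.coeff_mk]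
  rfl

lemma Dy3_coeff_T_zero : Dy3 (PowerSeries.coeff 0 T) = -4 - 8 * PowerSeries.coeff 0 J := by
  have hcoeffs : (PowerSeries.mk fun k => (k : ℚ) ^ 3 * if k = 0 then 0 else 8 / (k : ℚ) ^ 3) =
      -4 - 8 * PowerSeries.mk fun k => if k = 0 then -(1 / 2) else -1 := by
    ext k
    rw [map_sub, map_neg, ← map_ofNat PowerSeries.C 4, ← map_ofNat PowerSeries.C 8,
      PowerSeries.coeff_C_mul, PowerSeries.coeff_C, PowerSeries.coeff_mk, PowerSeries.coeff_mk]
    rcases eq_or_ne k 0 with rfl | hk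
    · norm_num
    · simp only [hk, if_false]
      field_simp
      norm_num
  simp only [T, J, PowerSeries.coeff_mk, if_true, Dy3_coe_powerSeries, hcoeffs]
  rw [map_sub, map_mul, map_neg, map_ofNat, map_ofNat]

lemma Dy3_zpow_add_zpow_neg_div_cube (a : ℤ) (k : ℕ) :
    Dy3 ((y ^ a + y ^ (-a)) / (k : LaurentSeries ℚ) ^ 3) =
      ((a : LaurentSeries ℚ) / k) ^ 3 * (y ^ a - y ^ (-a)) := by
  rw [Dy3_div_natCast_pow, map_add, Dy3_zpow, Dy3_zpow]
  push_cast
  ring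

lemma Dy3_coeff_T_of_ne_zero {d : ℕ} (hd : d ≠ 0) :
    Dy3 (PowerSeries.coeff d T) = -8 * PowerSeries.coeff d J - 16 * PowerSeries.coeff d G₁ := by
  simp only [T, J, G₁, PowerSeries.coeff_mk, if_neg hd, map_add, Dy3_ofNat_mul, map_sum,
    Dy3_zpow_add_zpow_neg_div_cube]
  simp only [Dy3_div_natCast_pow, Dy3_one, zero_div, Finset.sum_const_zero, mul_zero, zero_add]
  have hk : ∀ k ∈ d.divisors, (k : LaurentSeries ℚ) ≠ 0 := fun k hkd =>
    map_natCast (HahnSeries.C (Γ := ℤ) (R := ℚ)) k ▸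
      HahnSeries.C_ne_zero (Nat.cast_ne_zero.mpr (Nat.pos_of_mem_divisors hkd).ne')
  have hweight_one : ∑ k ∈ d.divisors,
        (((k : ℤ) : LaurentSeries ℚ) / k) ^ 3 * (y ^ (k : ℤ) - y ^ (-(k : ℤ))) =
      ∑ k ∈ d.divisors, (y ^ (k : ℤ) - y ^ (-(k : ℤ))) :=
    Finset.sum_congr rfl fun k hkd => by
      rw [Int.cast_natCast, div_self (hk k hkd), one_pow, one_mul]
  have hweight_eight : ∑ k ∈ d.divisors with Odd (d / k),
        (((2 * k : ℤ) : LaurentSeries ℚ) / k) ^ 3 *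
          (y ^ (2 * (k : ℤ)) - y ^ (-(2 * (k : ℤ)))) =
      8 * ∑ k ∈ d.divisors with Odd (d / k),
        (y ^ (2 * (k : ℤ)) - y ^ (-(2 * (k : ℤ)))) := by
    rw [Finset.mul_sum]
    refine Finset.sum_congr rfl fun k hkd => ?_
    have := hk k (Finset.mem_filter.mp hkd).1
    push_cast
    rw [mul_div_cancel_right₀ _ this]
    norm_num
  rw [hweight_one, hweight_eight]
  ring

/-- In `ℚ((y))[[q]]`: `(y·d/dy)³ T = −4 − 8·J − 16·G₁`. -/
theorem third_derivative_T : DyP (DyP (DyP T)) = -4 - 8 * J - 16 * G₁ := by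
  ext1 d
  rw [coeff_DyP_DyP_DyP]
  simp only [← map_ofNat PowerSeries.C, ← map_neg, map_sub, PowerSeries.coeff_C_mul,
    PowerSeries.coeff_C]
  rcases eq_or_ne d 0 with rfl | hd
  · simpa [G₁] using Dy3_coeff_T_zero
  · simpa [hd] using Dy3_coeff_T_of_ne_zero hd

end
end
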